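/- arXiv:1512.04333 — 2 statements merged into one kernel-verified Lean document; each statement's English description precedes it below -/
import Mathlib

section
/- For all positive integers A, D and real p with 0 < p < 1 and q = 1 - p, we have p^D * ∑_{k=0}^{A-1} C(D+k-1, D-1) * q^k = C(A+D-1, A-1) * p^D * q^A + ∑_{k=0}^{A-1} C(A+D, k) * p^(A+D-k) * q^k. -/
/-!
With `q = 1 - p`, the left-hand side is the probability of `D` successes before the `A`-th failure,
i.e. of at most `A - 1` failures in the first `A + D - 1` trials: a partial sum of the binomial
expansion of `(p + q) ^ (A + D - 1)`. Looking at one more trial splits this event into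
"fewer than `A` failures in `A + D` trials" and "exactly `A - 1` failures in `A + D - 1` trials,
then a failure", which is the correction term. Both steps are Pascal's rule together with
`p + q = 1`.
-/

open Finset

section

variable {R : Type*} [CommRing R]

def binomialPartialSum (p q : R) (n m : ℕ) : R :=
  ∑ k ∈ range m, (n.choose k : R) * p ^ (n - k) * q ^ k

theorem binomialPartialSum_succ (p q : R) (n m : ℕ) :
    binomialPartialSum p q n (m + 1) =
      binomialPartialSum p q n m + (n.choose m : R) * p ^ (n - m) * q ^ m :=
  sum_range_succ _ _

theorem choose_mul_pow_succ_sub (p : R) (n k : ℕ) :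
    (n.choose k : R) * p ^ (n + 1 - k) = p * ((n.choose k : R) * p ^ (n - k)) := by
  rcases le_or_gt k n with hk | hk
  · rw [Nat.sub_add_comm hk, pow_succ]; ring
  · simp [Nat.choose_eq_zero_of_lt hk]

variable {p q : R}

theorem binomialPartialSum_succ_succ (hpq : p + q = 1) (n m : ℕ) :
    binomialPartialSum p q (n + 1) (m + 1) =
      binomialPartialSum p q n m + (n.choose m : R) * p ^ (n + 1 - m) * q ^ m := by
  set upper := ∑ k ∈ range m, (n.choose (k + 1) : R) * p ^ (n - k) * q ^ (k + 1)
  set lower := ∑ k ∈ range (m + 1), (n.choose k : R) * p ^ (n + 1 - k) * q ^ k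
  have pascal :
      binomialPartialSum p q (n + 1) (m + 1) =
        q * binomialPartialSum p q n m + upper + p ^ (n + 1) := by
    simp only [binomialPartialSum, upper, sum_range_succ', mul_sum, ← sum_add_distrib,
      Nat.choose_succ_succ', Nat.cast_add, Nat.add_sub_add_right]
    simp only [Nat.choose_zero_right, Nat.cast_one, one_mul, Nat.sub_zero, pow_zero, mul_one]
    exact congrArg (· + _) (sum_congr rfl fun k _ => by ring)
  have lower_shift : lower = upper + p ^ (n + 1) := by
    simp [lower, upper, sum_range_succ']
  have lower_peel :
      lower = p * binomialPartialSum p q n m + (n.choose m : R) * p ^ (n + 1 - m) * q ^ m := by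
    simp only [lower, sum_range_succ, binomialPartialSum, mul_sum]
    exact congrArg (· + _) (sum_congr rfl fun k _ => by rw [choose_mul_pow_succ_sub]; ring)
  linear_combination pascal - lower_shift + lower_peel + binomialPartialSum p q n m * hpq

theorem binomialPartialSum_eq_binomialPartialSum_succ_add (hpq : p + q = 1) (n m : ℕ) :
    binomialPartialSum p q n (m + 1) =
      binomialPartialSum p q (n + 1) (m + 1) + (n.choose m : R) * p ^ (n - m) * q ^ (m + 1) := by
  rw [binomialPartialSum_succ_succ hpq, binomialPartialSum_succ, choose_mul_pow_succ_sub]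
  linear_combination (-(n.choose m : R) * p ^ (n - m) * q ^ m) * hpq

theorem pow_mul_sum_choose_mul_pow_eq_binomialPartialSum (hpq : p + q = 1) (d m : ℕ) :
    p ^ (d + 1) * ∑ k ∈ range m, ((d + k).choose d : R) * q ^ k =
      binomialPartialSum p q (d + m) m := by
  induction m with
  | zero => simp [binomialPartialSum]
  | succ m ih =>
    rw [sum_range_succ, mul_add, ih, ← add_assoc, binomialPartialSum_succ_succ hpq,
      Nat.choose_symm_add, show d + m + 1 - m = d + 1 by omega]
    ring

end

theorem negbinom_eq_binom_plus_correction_general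
    (A D : ℕ) (hA : 0 < A) (hD : 0 < D) (p q : ℝ)
    (hq : q = 1 - p) :
    p ^ D * ∑ k ∈ Finset.range A, ((D + k - 1).choose (D - 1) : ℝ) * q ^ k =
      ((A + D - 1).choose (A - 1) : ℝ) * p ^ D * q ^ A +
        ∑ k ∈ Finset.range A, ((A + D).choose k : ℝ) * p ^ (A + D - k) * q ^ k := by
  have hpq : p + q = 1 := by rw [hq]; ring
  obtain ⟨a, rfl⟩ : ∃ a, A = a + 1 := ⟨A - 1, by omega⟩
  obtain ⟨d, rfl⟩ : ∃ d, D = d + 1 := ⟨D - 1, by omega⟩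
  simp only [add_tsub_cancel_right, show ∀ k, d + 1 + k - 1 = d + k from fun k => by omega,
    show a + 1 + (d + 1) = d + (a + 1) + 1 by omega]
  rw [pow_mul_sum_choose_mul_pow_eq_binomialPartialSum hpq,
    binomialPartialSum_eq_binomialPartialSum_succ_add hpq, show d + (a + 1) - a = d + 1 by omega,
    binomialPartialSum]
  ring

theorem negbinom_eq_binom_plus_correction
    (A D : ℕ) (hA : 0 < A) (hD : 0 < D) (p q : ℝ)
    (hp : 0 < p) (hp1 : p < 1) (hq : q = 1 - p) :
    p ^ D * ∑ k ∈ Finset.range A, ((D + k - 1).choose (D - 1) : ℝ) * q ^ k =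
      ((A + D - 1).choose (A - 1) : ℝ) * p ^ D * q ^ A +
        ∑ k ∈ Finset.range A, ((A + D).choose k : ℝ) * p ^ (A + D - k) * q ^ k :=
  negbinom_eq_binom_plus_correction_general A D hA hD p q hq
end

section
/- For all positive integers A, D and real p with 0 < p < 1 and q = 1 - p, the quantity p^D * ∑_{k=0}^{A-1} C(D+k-1, D-1) * q^k is strictly greater than ∑_{h=0}^{A-1} C(A+D, h) * q^h * p^(A+D-h) and strictly less than ∑_{h=0}^{A} C(A+D, h) * q^h * p^(A+D-h). -/
/-! With `p + q = 1`, the middle quantity is the probability of at most `A - 1` failures before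
the `D`-th success, i.e. of at most `A - 1` failures among the first `A + D - 1` trials; so it is
the binomial partial sum `∑_{h<A} C(A+D-1, h) q^h p^(A+D-1-h)`. Conditioning on the last of
`A + D` trials gives `G(m+1, n+1) = p G(m, n+1) + q G(m, n)` for `G = binomPartialSum p q`, and with
`p + q = 1` each of the two outer sums differs from the middle one by a single positive term. -/

open Finset

section Binomial

variable {R : Type*} [CommRing R]

def binomTerm (p q : R) (m h : ℕ) : R :=
  (m.choose h : R) * q ^ h * p ^ (m - h)

def binomPartialSum (p q : R) (m n : ℕ) : R :=
  ∑ h ∈ range n, binomTerm p q m h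

lemma binomTerm_succ_zero (p q : R) (m : ℕ) :
    binomTerm p q (m + 1) 0 = p * binomTerm p q m 0 := by
  simp [binomTerm, pow_succ, mul_comm]

lemma binomTerm_succ_succ (p q : R) (m h : ℕ) :
    binomTerm p q (m + 1) (h + 1) = p * binomTerm p q m (h + 1) + q * binomTerm p q m h := by
  simp only [binomTerm, Nat.choose_succ_succ', Nat.cast_add]
  rcases lt_or_ge h m with hhm | hmh
  · obtain ⟨k, rfl⟩ : ∃ k, m = h + 1 + k := ⟨m - (h + 1), by omega⟩
    rw [show h + 1 + k + 1 - (h + 1) = k + 1 by omega, show h + 1 + k - (h + 1) = k by omega,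
      show h + 1 + k - h = k + 1 by omega]
    ring
  · rw [Nat.choose_eq_zero_of_lt (by omega : m < h + 1), Nat.sub_eq_zero_of_le hmh,
      Nat.sub_eq_zero_of_le (by omega : m + 1 ≤ h + 1)]
    ring

lemma binomPartialSum_succ_succ (p q : R) (m n : ℕ) :
    binomPartialSum p q (m + 1) (n + 1) =
      p * binomPartialSum p q m (n + 1) + q * binomPartialSum p q m n := by
  simp only [binomPartialSum, sum_range_succ' _ n, binomTerm_succ_succ, binomTerm_succ_zero,
    sum_add_distrib, mul_add, mul_sum]
  ring

lemma binomPartialSum_succ (p q : R) (m n : ℕ) :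
    binomPartialSum p q m (n + 1) = binomPartialSum p q m n + binomTerm p q m n :=
  sum_range_succ _ _

variable {p q : R} (hpq : p + q = 1)
include hpq

lemma binomPartialSum_succ_succ_eq_add (m n : ℕ) :
    binomPartialSum p q (m + 1) (n + 1) = binomPartialSum p q m n + p * binomTerm p q m n := by
  rw [binomPartialSum_succ_succ, binomPartialSum_succ]
  linear_combination binomPartialSum p q m n * hpq

lemma binomPartialSum_succ_succ_eq_sub (m n : ℕ) :
    binomPartialSum p q (m + 1) (n + 1) =
      binomPartialSum p q m (n + 1) - q * binomTerm p q m n := by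
  rw [binomPartialSum_succ_succ, binomPartialSum_succ]
  linear_combination (binomPartialSum p q m n + binomTerm p q m n) * hpq

lemma pow_succ_mul_sum_choose_eq_binomPartialSum (d n : ℕ) :
    p ^ (d + 1) * ∑ k ∈ range n, ((d + k).choose d : R) * q ^ k = binomPartialSum p q (n + d) n := by
  induction n with
  | zero => simp [binomPartialSum]
  | succ n ih =>
    rw [show n + 1 + d = n + d + 1 by omega, binomPartialSum_succ_succ_eq_add hpq, ← ih,
      sum_range_succ, mul_add, binomTerm, Nat.choose_symm_add, show n + d - n = d by omega,
      add_comm d n]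
    ring

end Binomial

lemma binomTerm_pos {R : Type*} [CommRing R] [PartialOrder R] [IsStrictOrderedRing R]
    {p q : R} (hp : 0 < p) (hq : 0 < q) {m h : ℕ} (hhm : h ≤ m) : 0 < binomTerm p q m h := by
  have : (0 : R) < m.choose h := by exact_mod_cast Nat.choose_pos hhm
  unfold binomTerm
  positivity

theorem negbinom_fundamental_estimate
    (A D : ℕ) (hA : 0 < A) (hD : 0 < D) (p q : ℝ)
    (hp : 0 < p) (hp1 : p < 1) (hq : q = 1 - p) :
    (∑ h ∈ Finset.range A, ((A + D).choose h : ℝ) * q ^ h * p ^ (A + D - h) <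
      p ^ D * ∑ k ∈ Finset.range A, ((D + k - 1).choose (D - 1) : ℝ) * q ^ k) ∧
    (p ^ D * ∑ k ∈ Finset.range A, ((D + k - 1).choose (D - 1) : ℝ) * q ^ k <
      ∑ h ∈ Finset.range (A + 1), ((A + D).choose h : ℝ) * q ^ h * p ^ (A + D - h)) := by
  obtain ⟨a, rfl⟩ : ∃ a, A = a + 1 := ⟨A - 1, by omega⟩
  obtain ⟨d, rfl⟩ : ∃ d, D = d + 1 := ⟨D - 1, by omega⟩
  have hpq : p + q = 1 := by linarith
  have hq0 : 0 < q := by linarith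
  set m := a + d + 1
  have hmid : p ^ (d + 1) * ∑ k ∈ range (a + 1), ((d + 1 + k - 1).choose (d + 1 - 1) : ℝ) * q ^ k =
      binomPartialSum p q m (a + 1) := by
    simpa [Nat.add_right_comm d 1, show a + 1 + d = m by omega] using
      pow_succ_mul_sum_choose_eq_binomPartialSum hpq d (a + 1)
  rw [hmid, show a + 1 + (d + 1) = m + 1 by omega]
  constructor
  · calc binomPartialSum p q (m + 1) (a + 1)
        = binomPartialSum p q m (a + 1) - q * binomTerm p q m a :=
          binomPartialSum_succ_succ_eq_sub hpq m a
      _ < binomPartialSum p q m (a + 1) :=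
          sub_lt_self _ (mul_pos hq0 (binomTerm_pos hp hq0 (by omega)))
  · calc binomPartialSum p q m (a + 1)
        < binomPartialSum p q m (a + 1) + p * binomTerm p q m (a + 1) :=
          lt_add_of_pos_right _ (mul_pos hp (binomTerm_pos hp hq0 (by omega)))
      _ = binomPartialSum p q (m + 1) (a + 1 + 1) :=
          (binomPartialSum_succ_succ_eq_add hpq m (a + 1)).symm
end
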